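/- Let V be a finite vertex type and F a finite face type, with each face f assigned an edge set E_f such that every vertex incident to an edge of E_f is incident to exactly two edges of E_f, and assume the two-face condition and the single-shared-edge condition. Then the number of flags (i.e., vertices of the Euler-transformed graph Ĝ) equals 2|E|, and the number of edges of Ĝ equals 4|E|, where E = ⋃_f E_f. -/

import Mathlib

/-!
Within one face every edge has two ends and every vertex it touches lies on two of its edges, so
by double counting a face has as many flags as edges; summing over the faces counts every edge
twice. The graph `Ĝ` is 4-regular: a flag `(v, f)` is joined to the other ends of the two edges
of `f` at `v`, and to `v` in the two faces across these edges, which are distinct because `f`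
shares at most one edge with any face. The handshake lemma then gives `4|E|` edges.
-/

open scoped Classical

noncomputable section

/-- A *flag* of a combinatorial polygonal complex: a pair `(v, f)` of a vertex and a face
such that `v` is incident to some edge of the edge set `E f` of the face `f`. -/
abbrev EulerFlag {V F : Type*} (E : F → Finset (Sym2 V)) : Type _ :=
  {p : V × F // ∃ e ∈ E p.2, p.1 ∈ e}

/-- The adjacency relation of the Euler-transformed graph on flags:
`(u, f)` and `(v, f)` are related when `{u, v} ∈ E f`, and `(v, f)` and `(v, f')` are related
when `f ≠ f'` and some edge `e ∈ E f ∩ E f'` contains `v`. -/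
def eulerRel {V F : Type*} (E : F → Finset (Sym2 V)) (p q : EulerFlag E) : Prop :=
  (p.val.2 = q.val.2 ∧ p.val.1 ≠ q.val.1 ∧ s(p.val.1, q.val.1) ∈ E p.val.2) ∨
    (p.val.1 = q.val.1 ∧ p.val.2 ≠ q.val.2 ∧
      ∃ e, e ∈ E p.val.2 ∧ e ∈ E q.val.2 ∧ p.val.1 ∈ e)

/-- The Euler-transformed graph `Ĝ` on flags. -/
def eulerGraph {V F : Type*} (E : F → Finset (Sym2 V)) : SimpleGraph (EulerFlag E) :=
  SimpleGraph.fromRel (eulerRel E)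

open Finset

section Incidence

variable {V F : Type*}

lemma card_filter_ne_mk_mem_eq_card_filter_mem [Fintype V] {S : Finset (Sym2 V)}
    (hnd : ∀ e ∈ S, ¬ e.IsDiag) (v : V) :
    #{u | u ≠ v ∧ s(v, u) ∈ S} = #{e ∈ S | v ∈ e} := by
  refine card_nbij (fun u => s(v, u)) (fun u hu => ?_) (fun u _ w _ h => ?_) (fun e he => ?_)
  · simp only [mem_coe, mem_filter, mem_univ, true_and] at hu ⊢
    exact ⟨hu.2, Sym2.mem_mk_left _ _⟩
  · exact Sym2.congr_right.mp h
  · simp only [mem_coe, mem_filter] at he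
    obtain ⟨u, rfl⟩ := Sym2.mem_iff_exists.mp he.2
    have huv : u ≠ v := fun h => hnd _ he.1 (Sym2.mk_isDiag_iff.mpr h.symm)
    exact ⟨u, by simpa using ⟨huv, he.1⟩, rfl⟩

lemma card_filter_exists_mem_eq_card [Fintype V] {S : Finset (Sym2 V)}
    (hnd : ∀ e ∈ S, ¬ e.IsDiag) (hreg : ∀ v, (∃ e ∈ S, v ∈ e) → #{e ∈ S | v ∈ e} = 2) :
    #{v | ∃ e ∈ S, v ∈ e} = #S := by
  refine Nat.eq_of_mul_eq_mul_right two_pos <| card_mul_eq_card_mul (fun v e => v ∈ e)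
    (fun v hv => hreg v (mem_filter.mp hv).2) fun e he => ?_
  rw [← Sym2.card_toFinset_of_not_isDiag e (hnd e he)]
  congr 1
  ext v
  simp only [bipartiteBelow, mem_filter, mem_univ, true_and, Sym2.mem_toFinset]
  exact ⟨And.right, fun hv => ⟨⟨e, he, hv⟩, hv⟩⟩

lemma sum_card_eq_two_mul_card_biUnion [Fintype F] (E : F → Finset (Sym2 V))
    (htwo : ∀ e : Sym2 V, (∃ f, e ∈ E f) → #{f | e ∈ E f} = 2) :
    ∑ f, #(E f) = 2 * #(univ.biUnion E) := by
  calc ∑ f, #(E f) = ∑ f, #((univ.biUnion E).bipartiteAbove (fun f e => e ∈ E f) f) := by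
        congr! 2 with f
        ext e
        simp only [bipartiteAbove, mem_filter, mem_biUnion, mem_univ, true_and]
        exact ⟨fun he => ⟨⟨f, he⟩, he⟩, And.right⟩
    _ = ∑ e ∈ univ.biUnion E, #(univ.bipartiteBelow (fun f e => e ∈ E f) e) :=
        sum_card_bipartiteAbove_eq_sum_card_bipartiteBelow _
    _ = 2 * #(univ.biUnion E) := by
        simp only [bipartiteBelow]
        rw [sum_congr rfl fun e he => htwo e (by simpa using he), sum_const, smul_eq_mul, mul_comm]

lemma card_faces_across_eq_card_filter_mem [Fintype F] (E : F → Finset (Sym2 V))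
    (htwo : ∀ e : Sym2 V, (∃ f, e ∈ E f) → #{f | e ∈ E f} = 2)
    (hshare : ∀ f f' : F, f ≠ f' → #(E f ∩ E f') ≤ 1) (f : F) (v : V) :
    #{g | g ≠ f ∧ ∃ e, e ∈ E f ∧ e ∈ E g ∧ v ∈ e} = #{e ∈ E f | v ∈ e} := by
  have := card_mul_eq_card_mul (fun g e => e ∈ E g) (m := 1) (n := 1)
    (s := {g | g ≠ f ∧ ∃ e, e ∈ E f ∧ e ∈ E g ∧ v ∈ e}) (t := {e ∈ E f | v ∈ e})
    (fun g hg => ?_) (fun e he => ?_)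
  · simpa using this
  · obtain ⟨hgf, e, hef, heg, hve⟩ := (mem_filter.mp hg).2
    refine le_antisymm ?_ (card_pos.mpr ⟨e, by simp [hef, heg, hve]⟩)
    refine (card_le_card fun e' he' => ?_).trans (hshare f g (Ne.symm hgf))
    simp only [bipartiteAbove, mem_filter] at he'
    exact mem_inter.mpr ⟨he'.1.1, he'.2⟩
  · obtain ⟨hef, hve⟩ := mem_filter.mp he
    have hf : f ∈ ({g | e ∈ E g} : Finset F) := by simpa using hef
    have hbelow : bipartiteBelow (fun g e => e ∈ E g)
        {g | g ≠ f ∧ ∃ e, e ∈ E f ∧ e ∈ E g ∧ v ∈ e} e = ({g | e ∈ E g} : Finset F).erase f := by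
      ext g
      simp only [bipartiteBelow, mem_filter, mem_erase, mem_univ, true_and]
      exact ⟨fun ⟨⟨hgf, _⟩, heg⟩ => ⟨hgf, heg⟩,
        fun ⟨hgf, heg⟩ => ⟨⟨hgf, e, hef, heg, hve⟩, heg⟩⟩
    rw [hbelow, card_erase_of_mem hf, htwo e ⟨f, hef⟩]

end Incidence

section EulerGraph

variable {V F : Type*} (E : F → Finset (Sym2 V))

lemma eulerRel_symm {p q : EulerFlag E} (h : eulerRel E p q) : eulerRel E q p := by
  rcases h with ⟨hf, hv, he⟩ | ⟨hv, hf, e, hep, heq, hve⟩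
  · exact Or.inl ⟨hf.symm, hv.symm, by rwa [Sym2.eq_swap, ← hf]⟩
  · exact Or.inr ⟨hv.symm, hf.symm, e, heq, hep, hv ▸ hve⟩

lemma eulerGraph_adj {p q : EulerFlag E} : (eulerGraph E).Adj p q ↔ eulerRel E p q := by
  rw [eulerGraph, SimpleGraph.fromRel_adj]
  refine ⟨fun ⟨_, h⟩ => h.elim id (eulerRel_symm E), fun h => ⟨?_, Or.inl h⟩⟩
  rintro rfl
  rcases h with ⟨-, h, -⟩ | ⟨-, h, -⟩ <;> exact h rfl

lemma card_eulerFlag [Fintype V] [Fintype F] :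
    Fintype.card (EulerFlag E) = ∑ f, #{v | ∃ e ∈ E f, v ∈ e} := by
  simp only [Fintype.card_subtype, card_filter, Fintype.sum_prod_type_right]

lemma eulerGraph_degree [Fintype V] [Fintype F] (p : EulerFlag E) :
    (eulerGraph E).degree p = #{u | u ≠ p.1.1 ∧ s(p.1.1, u) ∈ E p.1.2} +
      #{g | g ≠ p.1.2 ∧ ∃ e, e ∈ E p.1.2 ∧ e ∈ E g ∧ p.1.1 ∈ e} := by
  obtain ⟨⟨v, f⟩, hp⟩ := p
  have hsplit : (eulerGraph E).neighborFinset ⟨(v, f), hp⟩ =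
      ({q : EulerFlag E | f = q.1.2 ∧ v ≠ q.1.1 ∧ s(v, q.1.1) ∈ E f} : Finset _) ∪
        ({q : EulerFlag E | v = q.1.1 ∧ f ≠ q.1.2 ∧ ∃ e, e ∈ E f ∧ e ∈ E q.1.2 ∧ v ∈ e} :
          Finset _) := by
    ext q
    simp only [SimpleGraph.mem_neighborFinset, eulerGraph_adj, eulerRel, mem_union, mem_filter,
      mem_univ, true_and]
  dsimp only
  rw [← SimpleGraph.card_neighborFinset_eq_degree, hsplit,
    card_union_of_disjoint (disjoint_filter.mpr fun q _ hface hvertex => hvertex.2.1 hface.1)]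
  congr 1
  · refine card_nbij (fun q => q.1.1) (fun q hq => ?_) (fun q hq q' hq' h => ?_) (fun u hu => ?_)
    · simp only [mem_coe, mem_filter, mem_univ, true_and] at hq ⊢
      exact ⟨Ne.symm hq.2.1, hq.2.2⟩
    · simp only [mem_coe, mem_filter, mem_univ, true_and] at hq hq'
      exact Subtype.ext (Prod.ext h (hq.1.symm.trans hq'.1))
    · simp only [mem_coe, mem_filter, mem_univ, true_and] at hu
      exact ⟨⟨(u, f), s(v, u), hu.2, Sym2.mem_mk_right _ _⟩,
        by simpa using ⟨Ne.symm hu.1, hu.2⟩, rfl⟩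
  · refine card_nbij (fun q => q.1.2) (fun q hq => ?_) (fun q hq q' hq' h => ?_) (fun g hg => ?_)
    · simp only [mem_coe, mem_filter, mem_univ, true_and] at hq ⊢
      exact ⟨Ne.symm hq.2.1, hq.2.2⟩
    · simp only [mem_coe, mem_filter, mem_univ, true_and] at hq hq'
      exact Subtype.ext (Prod.ext (hq.1.symm.trans hq'.1) h)
    · simp only [mem_coe, mem_filter, mem_univ, true_and] at hg
      obtain ⟨hgf, e, hef, heg, hve⟩ := hg
      exact ⟨⟨(v, g), e, heg, hve⟩, by simpa using ⟨Ne.symm hgf, e, hef, heg, hve⟩, rfl⟩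

lemma eulerGraph_degree_eq_four [Fintype V] [Fintype F]
    (hnd : ∀ f, ∀ e ∈ E f, ¬ e.IsDiag)
    (hloc : ∀ f v, (∃ e ∈ E f, v ∈ e) → #{e ∈ E f | v ∈ e} = 2)
    (htwo : ∀ e : Sym2 V, (∃ f, e ∈ E f) → #{f | e ∈ E f} = 2)
    (hshare : ∀ f f' : F, f ≠ f' → #(E f ∩ E f') ≤ 1) (p : EulerFlag E) :
    (eulerGraph E).degree p = 4 := by
  rw [eulerGraph_degree, card_filter_ne_mk_mem_eq_card_filter_mem (hnd _),
    card_faces_across_eq_card_filter_mem E htwo hshare, hloc _ _ p.2]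

end EulerGraph

/-- Under the two-face and single-shared-edge conditions, the number of flags equals `2|E|`
and the number of edges of the Euler-transformed graph equals `4|E|`. -/
theorem euler_transform_counts {V F : Type*} [Fintype V] [Fintype F]
    (E : F → Finset (Sym2 V))
    (hnd : ∀ f, ∀ e ∈ E f, ¬ e.IsDiag)
    (hloc : ∀ f v, (∃ e ∈ E f, v ∈ e) → ((E f).filter (fun e => v ∈ e)).card = 2)
    (htwo : ∀ e : Sym2 V, (∃ f, e ∈ E f) →
      (Finset.univ.filter (fun f => e ∈ E f)).card = 2)
    (hshare : ∀ f f' : F, f ≠ f' → ((E f) ∩ (E f')).card ≤ 1) :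
    Fintype.card (EulerFlag E) = 2 * (Finset.univ.biUnion E).card ∧
    (eulerGraph E).edgeFinset.card = 4 * (Finset.univ.biUnion E).card := by
  have hflags : Fintype.card (EulerFlag E) = 2 * (Finset.univ.biUnion E).card := by
    rw [card_eulerFlag, sum_congr rfl fun f _ => card_filter_exists_mem_eq_card (hnd f) (hloc f),
      sum_card_eq_two_mul_card_biUnion E htwo]
  refine ⟨hflags, ?_⟩
  have handshake := (eulerGraph E).sum_degrees_eq_twice_card_edges
  rw [sum_congr rfl fun p _ => eulerGraph_degree_eq_four E hnd hloc htwo hshare p,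
    sum_const, card_univ, hflags, smul_eq_mul] at handshake
  omega
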